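/- Let h : ℝ → ℝ be a measurable function with E|h(A)| < ∞. Then E[h(A) W] = E[h(A)], where W is the stabilized generalized propensity score weight; that is, weighting by W preserves the marginal distribution of A. -/

import Mathlib

open MeasureTheory
open scoped BigOperators ENNReal

noncomputable section

abbrev Evec (p : ℕ) := EuclideanSpace ℝ (Fin p)

/-- Marginal density of `X`: f_X(x) = ∫ f(x,a) dν(a). -/
def margX {p : ℕ} (ν : Measure ℝ) (f : Evec p × ℝ → ℝ) (x : Evec p) : ℝ :=
  ∫ a, f (x, a) ∂ν

/-- Marginal density of `A`: f_A(a) = ∫ f(x,a) dμ(x). -/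
def margA {p : ℕ} (μ : Measure (Evec p)) (f : Evec p × ℝ → ℝ) (a : ℝ) : ℝ :=
  ∫ x, f (x, a) ∂μ

/-- The stabilized generalized propensity score weight
W(x,a) = f_A(a)·f_X(x) / f_{X,A}(x,a). -/
def gpsWeight {p : ℕ} (μ : Measure (Evec p)) (ν : Measure ℝ)
    (f : Evec p × ℝ → ℝ) (z : Evec p × ℝ) : ℝ :=
  margA μ f z.2 * margX ν f z.1 / f z


/- Wherever `f > 0` the weight times the joint density is the product of the marginal densities
`f_A(a) f_X(x)`, so by Fubini the left side factors as `(∫ f_X dμ) · ∫ h f_A dν`. The first factor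
is the total mass of `f`, which is `1`, and the second is `E[h(A)]` by Fubini again. -/

theorem integral_mul_integral_fst_eq_integral_prod {α β : Type*} [MeasurableSpace α]
    [MeasurableSpace β] {μ : Measure α} {ν : Measure β} [SigmaFinite μ] [SigmaFinite ν]
    {f : α × β → ℝ} {h : β → ℝ}
    (hint : Integrable (fun z => h z.2 * f z) (μ.prod ν)) :
    ∫ a, h a * ∫ x, f (x, a) ∂μ ∂ν = ∫ z, h z.2 * f z ∂(μ.prod ν) := by
  simp_rw [← integral_const_mul]
  exact (integral_prod_symm _ hint).symm

theorem gpsWeight_mul_self {p : ℕ} (μ : Measure (Evec p)) (ν : Measure ℝ)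
    {f : Evec p × ℝ → ℝ} {z : Evec p × ℝ} (hz : f z ≠ 0) :
    gpsWeight μ ν f z * f z = margA μ f z.2 * margX ν f z.1 :=
  div_mul_cancel₀ _ hz

theorem gps_weight_preserves_marginal_A_general {p : ℕ}
    (μ : Measure (Evec p)) (ν : Measure ℝ) [SigmaFinite μ] [SigmaFinite ν]
    (f : Evec p × ℝ → ℝ)
    (hf_pos : ∀ᵐ z ∂(μ.prod ν), 0 < f z)
    (hf_prob : ∫ z, f z ∂(μ.prod ν) = 1)
    (h : ℝ → ℝ)
    (hh_int : Integrable (fun z : Evec p × ℝ => h z.2 * f z) (μ.prod ν)) :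
    (∫ z : Evec p × ℝ, h z.2 * gpsWeight μ ν f z * f z ∂(μ.prod ν))
      = ∫ z : Evec p × ℝ, h z.2 * f z ∂(μ.prod ν) := by
  have hf_int : Integrable f (μ.prod ν) :=
    Integrable.of_integral_ne_zero (by rw [hf_prob]; exact one_ne_zero)
  have hmargX : ∫ x, margX ν f x ∂μ = 1 := (integral_prod f hf_int).symm.trans hf_prob
  calc ∫ z, h z.2 * gpsWeight μ ν f z * f z ∂(μ.prod ν)
      = ∫ z, margX ν f z.1 * (h z.2 * margA μ f z.2) ∂(μ.prod ν) := by
        refine integral_congr_ae ?_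
        filter_upwards [hf_pos] with z hz
        rw [mul_assoc, gpsWeight_mul_self μ ν hz.ne']
        ring
    _ = (∫ x, margX ν f x ∂μ) * ∫ a, h a * margA μ f a ∂ν :=
        integral_prod_mul (margX ν f) (fun a => h a * margA μ f a)
    _ = ∫ a, h a * margA μ f a ∂ν := by rw [hmargX, one_mul]
    _ = ∫ z, h z.2 * f z ∂(μ.prod ν) := integral_mul_integral_fst_eq_integral_prod hh_int

/-- Weighting by the stabilized GPS weight `W` preserves the marginal
distribution of `A`: for integrable `h(A)`, `E[h(A)W] = E[h(A)]`. -/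
theorem gps_weight_preserves_marginal_A {p : ℕ}
    (μ : Measure (Evec p)) (ν : Measure ℝ) [SigmaFinite μ] [SigmaFinite ν]
    (f : Evec p × ℝ → ℝ) (hf_meas : Measurable f)
    (hf_nonneg : ∀ z, 0 ≤ f z)
    (hf_pos : ∀ᵐ z ∂(μ.prod ν), 0 < f z)
    (hf_prob : ∫ z, f z ∂(μ.prod ν) = 1)
    (h : ℝ → ℝ) (hh : Measurable h)
    (hh_int : Integrable (fun z : Evec p × ℝ => h z.2 * f z) (μ.prod ν)) :
    (∫ z : Evec p × ℝ, h z.2 * gpsWeight μ ν f z * f z ∂(μ.prod ν))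
      = ∫ z : Evec p × ℝ, h z.2 * f z ∂(μ.prod ν) :=
  gps_weight_preserves_marginal_A_general μ ν f hf_pos hf_prob h hh_int
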